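/- The function F_sgn(α,β) = (2/π)·(α²+β²)^{-1/2}·Λ·E[|W|φ((α/β)|W|)/(C(Λ)+W²)] satisfies F_sgn(α,β) ≥ (1/(√2·π))·min(α/β, 1)/√(α²+β²) for all α/β ≥ 0 with β > 0. -/
import Mathlib


open MeasureTheory ProbabilityTheory
open scoped NNReal ENNReal

/-- `φ(x) = ∫₀ˣ e^{-t²/2} dt`. -/
noncomputable def phi (x : ℝ) : ℝ := ∫ t in (0 : ℝ)..x, Real.exp (-t ^ 2 / 2)

/-- `F_sgn(α,β) = (2/π)·(α²+β²)^{-1/2}·Λ·E[|W| φ((α/β)|W|)/(C(Λ)+W²)]`, `W ~ N(0,1)`. -/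
noncomputable def Fsgn (Λ c α β : ℝ) : ℝ :=
  2 / Real.pi * (Real.sqrt (α ^ 2 + β ^ 2))⁻¹ *
    (Λ * ∫ w, |w| * phi (α / β * |w|) / (c + w ^ 2) ∂(gaussianReal 0 1))

lemma cont_exp_neg_sq : Continuous fun t : ℝ => Real.exp (-t ^ 2 / 2) := by
  continuity

lemma phi_continuous : Continuous phi :=
  intervalIntegral.continuous_primitive
    (fun a b => (cont_exp_neg_sq.intervalIntegrable a b)) 0

lemma phi_nonneg {x : ℝ} (hx : 0 ≤ x) : 0 ≤ phi x :=
  intervalIntegral.integral_nonneg hx (fun t _ => (Real.exp_pos _).le)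

lemma phi_le_self {x : ℝ} (hx : 0 ≤ x) : phi x ≤ x := by
  have h : phi x ≤ ∫ t in (0:ℝ)..x, (1:ℝ) := by
    apply intervalIntegral.integral_mono_on hx
      (cont_exp_neg_sq.intervalIntegrable 0 x) (intervalIntegrable_const)
    intro t _
    rw [Real.exp_le_one_iff]
    nlinarith [sq_nonneg t]
  simpa using h

/-- Pointwise lower bound: `phi (u*x) ≥ m * x * e^{-x²/2}` for `0 ≤ m ≤ min u 1`. -/
lemma phi_lower {m u x : ℝ} (hm0 : 0 ≤ m) (hm1 : m ≤ 1) (hmu : m ≤ u) (hx : 0 ≤ x) :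
    m * x * Real.exp (-x ^ 2 / 2) ≤ phi (u * x) := by
  have hmx : 0 ≤ m * x := mul_nonneg hm0 hx
  have h1 : (∫ t in (0:ℝ)..(m*x), Real.exp (-x ^ 2 / 2)) ≤
      ∫ t in (0:ℝ)..(m*x), Real.exp (-t ^ 2 / 2) := by
    apply intervalIntegral.integral_mono_on hmx intervalIntegrable_const
      (cont_exp_neg_sq.intervalIntegrable 0 (m*x))
    intro t ht
    apply Real.exp_le_exp.2
    have ht0 : 0 ≤ t := ht.1
    have htx : t ≤ x := ht.2.trans (by nlinarith)
    nlinarith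
  have h2 : (∫ t in (0:ℝ)..(m*x), Real.exp (-t ^ 2 / 2)) ≤ phi (u * x) := by
    unfold phi
    rw [← intervalIntegral.integral_add_adjacent_intervals
      (cont_exp_neg_sq.intervalIntegrable 0 (m*x))
      (cont_exp_neg_sq.intervalIntegrable (m*x) (u*x))]
    have : 0 ≤ ∫ t in (m*x)..(u*x), Real.exp (-t ^ 2 / 2) :=
      intervalIntegral.integral_nonneg (by nlinarith) (fun t _ => (Real.exp_pos _).le)
    linarith
  calc m * x * Real.exp (-x ^ 2 / 2)
      = ∫ t in (0:ℝ)..(m*x), Real.exp (-x ^ 2 / 2) := by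
        rw [intervalIntegral.integral_const, smul_eq_mul]; ring_nf
    _ ≤ phi (u * x) := h1.trans h2

/-- Gaussian expectation as a Lebesgue integral against the explicit density. -/
lemma gauss_integral_eq (g : ℝ → ℝ) :
    ∫ w, g w ∂(gaussianReal 0 1) =
      ∫ w, (Real.sqrt (2 * Real.pi))⁻¹ * Real.exp (-w ^ 2 / 2) * g w := by
  rw [gaussianReal_of_var_ne_zero 0 one_ne_zero]
  have hd : (gaussianPDF 0 1) = fun x => ((Real.toNNReal (gaussianPDFReal 0 1 x) : ℝ≥0) : ℝ≥0∞) :=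
    rfl
  rw [hd, integral_withDensity_eq_integral_smul
    ((measurable_gaussianPDFReal 0 1).real_toNNReal) g]
  congr 1
  ext w
  rw [NNReal.smul_def, smul_eq_mul, Real.coe_toNNReal _ (gaussianPDFReal_nonneg 0 1 w)]
  congr 1
  simp only [gaussianPDFReal, NNReal.coe_one, mul_one, sub_zero]

/-- The key comparison: extra factor `e^{-w²/2}` costs at most a factor `2√2`. -/
lemma key_compare {c : ℝ} (hc : 0 < c) :
    (∫ w, w ^ 2 / (c + w ^ 2) ∂(gaussianReal 0 1)) ≤
      2 * Real.sqrt 2 *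
        ∫ w, w ^ 2 * Real.exp (-w ^ 2 / 2) / (c + w ^ 2) ∂(gaussianReal 0 1) := by
  have hden : ∀ w : ℝ, (0:ℝ) < c + w ^ 2 := fun w => by positivity
  set K : ℝ := (Real.sqrt (2 * Real.pi))⁻¹ with hK
  have hK0 : 0 ≤ K := by positivity
  set f : ℝ → ℝ := fun v => v ^ 2 * Real.exp (-v ^ 2 / 2) / (c + v ^ 2) with hf
  set g : ℝ → ℝ := fun w => w ^ 2 * Real.exp (-w ^ 2) / (c + w ^ 2) with hg
  -- continuity / integrability
  have hfc : Continuous f := by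
    apply Continuous.div (by continuity) (by continuity)
    exact fun w => (hden w).ne'
  have hgc : Continuous g := by
    apply Continuous.div (by continuity) (by continuity)
    exact fun w => (hden w).ne'
  have hexp_int : Integrable (fun v : ℝ => Real.exp (-(1/2 : ℝ) * v ^ 2)) :=
    integrable_exp_neg_mul_sq (by norm_num)
  have hfle : ∀ v : ℝ, f v ≤ Real.exp (-(1/2 : ℝ) * v ^ 2) := by
    intro v
    have h1 : v ^ 2 / (c + v ^ 2) ≤ 1 := by
      rw [div_le_one (hden v)]; linarith [hc]
    have : f v = v ^ 2 / (c + v ^ 2) * Real.exp (-v ^ 2 / 2) := by rw [hf]; ring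
    rw [this]
    have h2 : Real.exp (-v ^ 2 / 2) = Real.exp (-(1/2:ℝ) * v ^ 2) := by ring_nf
    rw [h2]
    calc v ^ 2 / (c + v ^ 2) * Real.exp (-(1/2:ℝ) * v ^ 2)
        ≤ 1 * Real.exp (-(1/2:ℝ) * v ^ 2) := by
          apply mul_le_mul_of_nonneg_right h1 (Real.exp_pos _).le
      _ = Real.exp (-(1/2:ℝ) * v ^ 2) := one_mul _
  have hf_nonneg : ∀ v : ℝ, 0 ≤ f v := fun v => by
    apply div_nonneg (by positivity) (hden v).le
  have hg_nonneg : ∀ v : ℝ, 0 ≤ g v := fun v => by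
    apply div_nonneg (by positivity) (hden v).le
  have hf_int : Integrable f := by
    refine hexp_int.mono' hfc.aestronglyMeasurable (.of_forall fun v => ?_)
    rw [Real.norm_of_nonneg (hf_nonneg v)]
    exact hfle v
  have hsqrt2 : (0:ℝ) < Real.sqrt 2 := Real.sqrt_pos.2 (by norm_num)
  have hsq2 : Real.sqrt 2 ^ 2 = 2 := Real.sq_sqrt (by norm_num)
  have hgd_int : Integrable (fun v : ℝ => g (v / Real.sqrt 2)) := by
    refine hexp_int.mono' (hgc.comp (by continuity)).aestronglyMeasurable
      (.of_forall fun v => ?_)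
    rw [Real.norm_of_nonneg (hg_nonneg _)]
    have h1 : (v / Real.sqrt 2) ^ 2 = v ^ 2 / 2 := by
      rw [div_pow, hsq2]
    have h2 : g (v / Real.sqrt 2) = (v ^ 2 / 2) * Real.exp (-(v ^ 2 / 2)) / (c + v ^ 2 / 2) := by
      simp only [hg]; rw [div_pow, hsq2]
    rw [h2]
    have h3 : (v ^ 2 / 2) / (c + v ^ 2 / 2) ≤ 1 := by
      rw [div_le_one (by positivity)]; linarith [hc]
    have h4 : Real.exp (-(v ^ 2 / 2)) = Real.exp (-(1/2:ℝ) * v ^ 2) := by ring_nf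
    have : (v ^ 2 / 2) * Real.exp (-(v ^ 2 / 2)) / (c + v ^ 2 / 2)
        = (v ^ 2 / 2) / (c + v ^ 2 / 2) * Real.exp (-(1/2:ℝ) * v ^ 2) := by
      rw [← h4]; ring
    rw [this]
    calc (v ^ 2 / 2) / (c + v ^ 2 / 2) * Real.exp (-(1/2:ℝ) * v ^ 2)
        ≤ 1 * Real.exp (-(1/2:ℝ) * v ^ 2) :=
          mul_le_mul_of_nonneg_right h3 (Real.exp_pos _).le
      _ = Real.exp (-(1/2:ℝ) * v ^ 2) := one_mul _
  -- pointwise: f v ≤ 2 * g (v / √2)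
  have hpt : ∀ v : ℝ, f v ≤ 2 * g (v / Real.sqrt 2) := by
    intro v
    have h1 : (v / Real.sqrt 2) ^ 2 = v ^ 2 / 2 := by rw [div_pow, hsq2]
    have h2 : g (v / Real.sqrt 2) = (v ^ 2 / 2) * Real.exp (-(v ^ 2 / 2)) / (c + v ^ 2 / 2) := by
      simp only [hg]; rw [div_pow, hsq2]
    rw [h2]
    simp only [hf]
    have hexp : Real.exp (-(v ^ 2 / 2)) = Real.exp (-v ^ 2 / 2) := by rw [neg_div]
    have hrw : 2 * (v ^ 2 / 2 * Real.exp (-(v ^ 2 / 2)) / (c + v ^ 2 / 2))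
        = v ^ 2 * Real.exp (-v ^ 2 / 2) / (c + v ^ 2 / 2) := by
      rw [hexp]; ring
    rw [hrw]
    apply div_le_div_of_nonneg_left (by positivity) (by positivity)
    nlinarith [sq_nonneg v]
  -- integrate the pointwise bound
  have hstep : (∫ v, f v) ≤ 2 * Real.sqrt 2 * ∫ w, g w := by
    have h1 : (∫ v, f v) ≤ ∫ v, 2 * g (v / Real.sqrt 2) :=
      integral_mono hf_int (hgd_int.const_mul 2) hpt
    have h2 : (∫ v, 2 * g (v / Real.sqrt 2)) = 2 * ∫ v, g (v / Real.sqrt 2) :=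
      integral_const_mul 2 _
    have h3 : (∫ v, g (v / Real.sqrt 2)) = |Real.sqrt 2| • ∫ w, g w :=
      MeasureTheory.Measure.integral_comp_div g (Real.sqrt 2)
    rw [h2, h3, abs_of_pos hsqrt2, smul_eq_mul] at h1
    linarith [h1]
  -- convert back to gaussian integrals
  have hA : (∫ w, w ^ 2 / (c + w ^ 2) ∂(gaussianReal 0 1)) = K * ∫ v, f v := by
    rw [gauss_integral_eq]
    rw [← integral_const_mul]
    congr 1; ext w; simp only [hf]; ring
  have hB : (∫ w, w ^ 2 * Real.exp (-w ^ 2 / 2) / (c + w ^ 2) ∂(gaussianReal 0 1))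
      = K * ∫ w, g w := by
    rw [gauss_integral_eq]
    rw [← integral_const_mul]
    congr 1; ext w; simp only [hg]
    have hee : Real.exp (-w ^ 2 / 2) * Real.exp (-w ^ 2 / 2) = Real.exp (-w ^ 2) := by
      rw [← Real.exp_add]; congr 1; ring
    rw [← hee]; ring
  rw [hA, hB]
  calc K * ∫ v, f v ≤ K * (2 * Real.sqrt 2 * ∫ w, g w) :=
        mul_le_mul_of_nonneg_left hstep hK0
    _ = 2 * Real.sqrt 2 * (K * ∫ w, g w) := by ring

set_option maxHeartbeats 1000000 in
/-- `F_sgn(α,β) ≥ (1/(√2·π))·min(α/β, 1)/√(α²+β²)` whenever `α/β ≥ 0` (`β > 0`, `α ≥ 0`),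
where `c = C(Λ)` solves `1/Λ = E[W²/(c+W²)]`. -/
theorem statement19 (Λ c α β : ℝ) (hΛ : 1 ≤ Λ) (hc : 0 < c)
    (hfix : 1 / Λ = ∫ w, w ^ 2 / (c + w ^ 2) ∂(gaussianReal 0 1))
    (hβ : 0 < β) (hα : 0 ≤ α) :
    1 / (Real.sqrt 2 * Real.pi) * min (α / β) 1 / Real.sqrt (α ^ 2 + β ^ 2) ≤
      Fsgn Λ c α β := by
  have hden : ∀ w : ℝ, (0:ℝ) < c + w ^ 2 := fun w => by positivity
  set u : ℝ := α / β with hu_def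
  have hu : 0 ≤ u := div_nonneg hα hβ.le
  set m : ℝ := min u 1 with hm_def
  have hm0 : 0 ≤ m := le_min hu zero_le_one
  have hm1 : m ≤ 1 := min_le_right _ _
  have hmu : m ≤ u := min_le_left _ _
  have hΛ0 : (0:ℝ) < Λ := lt_of_lt_of_le one_pos hΛ
  set γ := gaussianReal 0 1 with hγ
  -- integrability of both gaussian integrands
  have hBc : Continuous fun w : ℝ => w ^ 2 * Real.exp (-w ^ 2 / 2) / (c + w ^ 2) := by
    apply Continuous.div (by continuity) (by continuity)
    exact fun w => (hden w).ne'
  have hIc : Continuous fun w : ℝ => |w| * phi (u * |w|) / (c + w ^ 2) := by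
    apply Continuous.div
      (continuous_abs.mul (phi_continuous.comp (by continuity))) (by continuity)
    exact fun w => (hden w).ne'
  have hB_int : Integrable (fun w : ℝ => w ^ 2 * Real.exp (-w ^ 2 / 2) / (c + w ^ 2)) γ := by
    refine (integrable_const (1:ℝ)).mono' hBc.aestronglyMeasurable (.of_forall fun w => ?_)
    have h0 : (0:ℝ) ≤ w ^ 2 * Real.exp (-w ^ 2 / 2) / (c + w ^ 2) := by positivity
    rw [Real.norm_of_nonneg h0]
    rw [div_le_one (hden w)]
    have he : Real.exp (-w ^ 2 / 2) ≤ 1 := by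
      rw [Real.exp_le_one_iff]; nlinarith [sq_nonneg w]
    nlinarith [sq_nonneg w, hc, Real.exp_pos (-w ^ 2 / 2)]
  have hI_int : Integrable (fun w : ℝ => |w| * phi (u * |w|) / (c + w ^ 2)) γ := by
    refine (integrable_const u).mono' hIc.aestronglyMeasurable (.of_forall fun w => ?_)
    have habs : (0:ℝ) ≤ |w| := abs_nonneg w
    have harg : 0 ≤ u * |w| := mul_nonneg hu habs
    have h0 : (0:ℝ) ≤ |w| * phi (u * |w|) / (c + w ^ 2) :=
      div_nonneg (mul_nonneg habs (phi_nonneg harg)) (hden w).le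
    rw [Real.norm_of_nonneg h0]
    rw [div_le_iff₀ (hden w)]
    have h1 : phi (u * |w|) ≤ u * |w| := phi_le_self harg
    have h2 : |w| * phi (u * |w|) ≤ u * (|w| * |w|) := by nlinarith
    have h3 : |w| * |w| = w ^ 2 := by rw [← abs_mul, abs_mul_self]; ring
    nlinarith [hc, mul_nonneg hu (sq_nonneg w)]
  -- the pointwise bound integrated
  have hmono : m * (∫ w, w ^ 2 * Real.exp (-w ^ 2 / 2) / (c + w ^ 2) ∂γ) ≤
      ∫ w, |w| * phi (u * |w|) / (c + w ^ 2) ∂γ := by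
    rw [← integral_const_mul]
    apply integral_mono (hB_int.const_mul m) hI_int
    intro w
    have habs : (0:ℝ) ≤ |w| := abs_nonneg w
    have hphi := phi_lower hm0 hm1 hmu habs
    have h3 : |w| * |w| = w ^ 2 := by rw [← abs_mul, abs_mul_self]; ring
    have hsq : |w| ^ 2 = w ^ 2 := sq_abs w
    have key : m * (w ^ 2 * Real.exp (-w ^ 2 / 2)) ≤ |w| * phi (u * |w|) := by
      have h4 : m * |w| * Real.exp (-|w| ^ 2 / 2) ≤ phi (u * |w|) := hphi
      rw [hsq] at h4
      calc m * (w ^ 2 * Real.exp (-w ^ 2 / 2))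
          = |w| * (m * |w| * Real.exp (-w ^ 2 / 2)) := by rw [← h3]; ring
        _ ≤ |w| * phi (u * |w|) := mul_le_mul_of_nonneg_left h4 habs
    have heq : m * (w ^ 2 * Real.exp (-w ^ 2 / 2) / (c + w ^ 2))
        = m * (w ^ 2 * Real.exp (-w ^ 2 / 2)) / (c + w ^ 2) := by ring
    dsimp only
    rw [heq]
    exact div_le_div_of_nonneg_right key (hden w).le
  -- combine with the key comparison and the fixed-point identity
  have hsqrt2 : (0:ℝ) < Real.sqrt 2 := Real.sqrt_pos.2 (by norm_num)
  set A := ∫ w, w ^ 2 / (c + w ^ 2) ∂γ with hA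
  set B := ∫ w, w ^ 2 * Real.exp (-w ^ 2 / 2) / (c + w ^ 2) ∂γ with hB
  set I := ∫ w, |w| * phi (u * |w|) / (c + w ^ 2) ∂γ with hI
  have hkey : A ≤ 2 * Real.sqrt 2 * B := key_compare hc
  have hAval : A = 1 / Λ := hfix.symm
  have hchain : m / (2 * Real.sqrt 2) * (1 / Λ) ≤ I := by
    have hB_ge : (1 / Λ) / (2 * Real.sqrt 2) ≤ B := by
      rw [← hAval]
      rw [div_le_iff₀ (by positivity)]
      linarith [hkey]
    calc m / (2 * Real.sqrt 2) * (1 / Λ)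
        = m * ((1 / Λ) / (2 * Real.sqrt 2)) := by ring
      _ ≤ m * B := mul_le_mul_of_nonneg_left hB_ge hm0
      _ ≤ I := hmono
  have hΛI : m / (2 * Real.sqrt 2) ≤ Λ * I := by
    have := mul_le_mul_of_nonneg_left hchain hΛ0.le
    calc m / (2 * Real.sqrt 2)
        = Λ * (m / (2 * Real.sqrt 2) * (1 / Λ)) := by field_simp
      _ ≤ Λ * I := this
  -- final arithmetic
  have hs : (0:ℝ) < Real.sqrt (α ^ 2 + β ^ 2) := Real.sqrt_pos.2 (by positivity)
  have hπ : (0:ℝ) < Real.pi := Real.pi_pos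
  unfold Fsgn
  rw [← hγ, ← hu_def, ← hI]
  have hcoef : (0:ℝ) ≤ 2 / Real.pi * (Real.sqrt (α ^ 2 + β ^ 2))⁻¹ := by positivity
  calc 1 / (Real.sqrt 2 * Real.pi) * m / Real.sqrt (α ^ 2 + β ^ 2)
      = 2 / Real.pi * (Real.sqrt (α ^ 2 + β ^ 2))⁻¹ * (m / (2 * Real.sqrt 2)) := by
        field_simp
    _ ≤ 2 / Real.pi * (Real.sqrt (α ^ 2 + β ^ 2))⁻¹ * (Λ * I) :=
        mul_le_mul_of_nonneg_left hΛI hcoef
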